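/- arXiv:2603.09167 — 2 statements merged into one kernel-verified Lean document; each statement's English description precedes it below -/
import Mathlib

section
/- The optimal pair (P', Q') in the water-filling characterization of D_α^δ(P‖Q) is independent of α: for any α₁, α₂ > 1, the same pair (P', Q') simultaneously minimizes Σ_x P'(x)^{α₁} Q'(x)^{1−α₁} and Σ_x P'(x)^{α₂} Q'(x)^{1−α₂} over the feasible set {(P', Q') distributions : (1−δ)P'(x) ≤ P(x), (1−δ)Q'(x) ≤ Q(x)}. -/
open scoped ENNReal

/-- Rényi divergence of order `α` between finitely supported distributions, using the
convention `0 ^ (1-α) = ∞` for `α > 1` (so non-absolutely-continuous pairs get `⊤`). -/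
noncomputable def renyiDiv {X : Type*} [Fintype X] (α : ℝ) (P Q : X → ℝ≥0∞) : EReal :=
  ((α - 1)⁻¹ : ℝ) * ENNReal.log (∑ x, P x ^ α * Q x ^ (1 - α))

/-- `P` is a probability mass function. -/
def IsPMF {X : Type*} [Fintype X] (P : X → ℝ≥0∞) : Prop := ∑ x, P x = 1

/-- δ-approximate Rényi divergence of order α. -/
noncomputable def approxRenyiDiv {X : Type*} [Fintype X] (α δ : ℝ) (P Q : X → ℝ≥0∞) :
    EReal :=
  sInf { d : EReal | ∃ P' P'' Q' Q'' : X → ℝ≥0∞,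
    IsPMF P' ∧ IsPMF P'' ∧ IsPMF Q' ∧ IsPMF Q'' ∧
    (∀ x, P x = ENNReal.ofReal (1 - δ) * P' x + ENNReal.ofReal δ * P'' x) ∧
    (∀ x, Q x = ENNReal.ofReal (1 - δ) * Q' x + ENNReal.ofReal δ * Q'' x) ∧
    d = renyiDiv α P' Q' }

/-- The Bernoulli distribution on `Bool`. -/
noncomputable def Ber (p : ℝ) : Bool → ℝ≥0∞ :=
  fun b => if b then ENNReal.ofReal p else ENNReal.ofReal (1 - p)


open MeasureTheory Set Real Finset

section WaterFillAux




lemma compare {X : Type*} [Fintype X] (b l γ₀ : ℝ) (p q p' q' p'' q'' : X → ℝ)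
    (hb : 0 < b)
    (hq0 : ∀ x, 0 ≤ q x)
    (hγ₀l : γ₀ ≤ l)
    (hq'0 : ∀ x, 0 ≤ q' x)
    (hq'sum : ∑ x, q' x = 1)
    (hp't : ∀ x, b * p' x = min (p x) (l * q x))
    (hlsum : ∑ x, min (p x) (l * q x) = b)
    (hsmall : ∀ γ : ℝ, 0 ≤ γ → γ ≤ γ₀ → ∀ x, γ * q' x ≤ p' x)
    (hmid : ∀ γ : ℝ, γ₀ ≤ γ → ∀ x, min (p x) (γ * q x) ≤ γ * (b * q' x))
    (hp''sum : ∑ x, p'' x = 1) (hq''sum : ∑ x, q'' x = 1)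
    (hp''f : ∀ x, b * p'' x ≤ p x) (hq''f : ∀ x, b * q'' x ≤ q x)
    (γ : ℝ) (hγ : 0 ≤ γ) :
    ∑ x, max (p' x - γ * q' x) 0 ≤ ∑ x, max (p'' x - γ * q'' x) 0 := by
  classical
  have hp'sum : ∑ x, p' x = 1 := by
    have h : ∑ x, b * p' x = b := by
      rw [Finset.sum_congr rfl (fun x _ => hp't x), hlsum]
    rw [← Finset.mul_sum] at h
    have := mul_left_cancel₀ hb.ne' (h.trans (mul_one b).symm)
    exact this
  rcases le_or_gt γ γ₀ with h1 | h1
  · -- small γ : LHS = 1 - γ, RHS ≥ 1 - γ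
    have hL : ∑ x, max (p' x - γ * q' x) 0 = 1 - γ := by
      have heq : ∀ x, max (p' x - γ * q' x) 0 = p' x - γ * q' x := by
        intro x; exact max_eq_left (sub_nonneg.2 (hsmall γ hγ h1 x))
      rw [Finset.sum_congr rfl (fun x _ => heq x), Finset.sum_sub_distrib, hp'sum,
        ← Finset.mul_sum, hq'sum, mul_one]
    have hR : 1 - γ ≤ ∑ x, max (p'' x - γ * q'' x) 0 := by
      calc 1 - γ = ∑ x, (p'' x - γ * q'' x) := by
            rw [Finset.sum_sub_distrib, hp''sum, ← Finset.mul_sum, hq''sum, mul_one]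
        _ ≤ ∑ x, max (p'' x - γ * q'' x) 0 :=
            Finset.sum_le_sum (fun x _ => le_max_left _ _)
    rw [hL]; exact hR
  rcases le_or_gt γ l with h2 | h2
  · -- middle γ
    have hL : ∑ x, max (p' x - γ * q' x) 0 ≤ (b - ∑ x, min (p x) (γ * q x)) / b := by
      have hpt : ∀ x, max (p' x - γ * q' x) 0 ≤
          (min (p x) (l * q x) - min (p x) (γ * q x)) / b := by
        intro x
        have hm := hmid γ h1.le x
        have hmono : min (p x) (γ * q x) ≤ min (p x) (l * q x) :=
          min_le_min le_rfl (mul_le_mul_of_nonneg_right h2 (hq0 x))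
        rw [max_le_iff]
        refine ⟨?_, div_nonneg (sub_nonneg.2 hmono) hb.le⟩
        rw [le_div_iff₀ hb]
        have hexp : (p' x - γ * q' x) * b = b * p' x - γ * (b * q' x) := by ring
        rw [hexp, hp't]
        linarith
      calc ∑ x, max (p' x - γ * q' x) 0
          ≤ ∑ x, (min (p x) (l * q x) - min (p x) (γ * q x)) / b :=
            Finset.sum_le_sum (fun x _ => hpt x)
        _ = (b - ∑ x, min (p x) (γ * q x)) / b := by
            rw [← Finset.sum_div, Finset.sum_sub_distrib, hlsum]
    have hR : (b - ∑ x, min (p x) (γ * q x)) / b ≤ ∑ x, max (p'' x - γ * q'' x) 0 := by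
      set S := Finset.univ.filter (fun x => γ * q x < p x) with hS
      have hsplit : ∑ x, min (p x) (γ * q x)
          = ∑ x ∈ Sᶜ, p x + γ * ∑ x ∈ S, q x := by
        rw [Finset.mul_sum, ← Finset.sum_add_sum_compl S (f := fun x => min (p x) (γ * q x)),
          add_comm]
        congr 1
        · refine Finset.sum_congr rfl ?_
          intro x hx
          simp only [hS, Finset.compl_filter, Finset.mem_filter, not_lt] at hx
          exact min_eq_left hx.2
        · refine Finset.sum_congr rfl ?_
          intro x hx
          simp only [hS, Finset.mem_filter] at hx
          exact min_eq_right hx.2.le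
      have hRS : ∑ x ∈ S, (p'' x - γ * q'' x) ≤ ∑ x, max (p'' x - γ * q'' x) 0 := by
        calc ∑ x ∈ S, (p'' x - γ * q'' x) ≤ ∑ x ∈ S, max (p'' x - γ * q'' x) 0 :=
              Finset.sum_le_sum (fun x _ => le_max_left _ _)
          _ ≤ ∑ x, max (p'' x - γ * q'' x) 0 :=
              Finset.sum_le_sum_of_subset_of_nonneg (Finset.subset_univ S)
                (fun x _ _ => le_max_right _ _)
      have h4 : b * ∑ x ∈ Sᶜ, p'' x ≤ ∑ x ∈ Sᶜ, p x := by
        rw [Finset.mul_sum]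
        exact Finset.sum_le_sum (fun x _ => hp''f x)
      have h5 : b * ∑ x ∈ S, q'' x ≤ ∑ x ∈ S, q x := by
        rw [Finset.mul_sum]
        exact Finset.sum_le_sum (fun x _ => hq''f x)
      have h6 : ∑ x ∈ S, p'' x = 1 - ∑ x ∈ Sᶜ, p'' x := by
        rw [← hp''sum, ← Finset.sum_add_sum_compl S (f := p'')]; ring
      have h7 : (b - ∑ x, min (p x) (γ * q x)) / b ≤ ∑ x ∈ S, (p'' x - γ * q'' x) := by
        rw [Finset.sum_sub_distrib, ← Finset.mul_sum, h6, hsplit]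
        rw [div_le_iff₀ hb]
        have h8 : γ * (b * ∑ x ∈ S, q'' x) ≤ γ * ∑ x ∈ S, q x :=
          mul_le_mul_of_nonneg_left h5 hγ
        nlinarith [h4, h8]
      exact h7.trans hRS
    exact hL.trans hR
  · -- large γ : LHS = 0
    have hL : ∑ x, max (p' x - γ * q' x) 0 = 0 := by
      apply Finset.sum_eq_zero
      intro x _
      have h3 := hmid l hγ₀l x
      have h4 : b * p' x ≤ γ * (b * q' x) := by
        rw [hp't]
        exact h3.trans (mul_le_mul_of_nonneg_right h2.le (mul_nonneg hb.le (hq'0 x)))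
      have : p' x - γ * q' x ≤ 0 := by nlinarith
      exact max_eq_right this
    rw [hL]
    exact Finset.sum_nonneg (fun x _ => le_max_right _ _)




lemma exists_clip {X : Type*} [Fintype X] (p q : X → ℝ) (hp0 : ∀ x, 0 ≤ p x)
    (hq0 : ∀ x, 0 ≤ q x) (hq1 : ∑ x, q x = 1) (b : ℝ)
    (hlow : ∑ x, min (p x) (q x) < b)
    (hhigh : b ≤ ∑ x, (if q x = 0 then 0 else p x)) :
    ∃ l : ℝ, 1 ≤ l ∧ ∑ x, min (p x) (l * q x) = b := by
  classical
  set φ : ℝ → ℝ := fun l => ∑ x, min (p x) (l * q x) with hφ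
  have hcont : Continuous φ := by
    apply continuous_finset_sum
    intro x _
    exact continuous_const.min ((continuous_mul_right (q x)))
  have hF : (Finset.univ.filter (fun x => q x ≠ 0)).Nonempty := by
    rw [Finset.filter_nonempty_iff]
    by_contra h
    push_neg at h
    have : ∑ x, q x = 0 := Finset.sum_eq_zero (fun x hx => h x hx)
    rw [hq1] at this; norm_num at this
  set M := (Finset.univ.filter (fun x => q x ≠ 0)).sup' hF (fun x => p x / q x) with hM
  set l₁ := max M 1 with hl₁
  have hφ1 : φ 1 < b := by
    simpa [hφ, one_mul] using hlow
  have hφM : b ≤ φ l₁ := by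
    refine hhigh.trans (Finset.sum_le_sum (fun x _ => ?_))
    by_cases hx : q x = 0
    · rw [if_pos hx, hx, mul_zero, min_eq_right (hp0 x)]
    · rw [if_neg hx]
      refine le_min le_rfl ?_
      have hqx : 0 < q x := lt_of_le_of_ne (hq0 x) (Ne.symm hx)
      have h1 : p x / q x ≤ M := hM ▸ Finset.le_sup' (fun x => p x / q x)
        (Finset.mem_filter.2 ⟨Finset.mem_univ x, hx⟩)
      have h2 : p x ≤ M * q x := (div_le_iff₀ hqx).mp h1
      exact h2.trans (mul_le_mul_of_nonneg_right (le_max_left M 1) hqx.le)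
  have hivt := intermediate_value_Icc (le_max_right M 1) hcont.continuousOn
  obtain ⟨l, hl, hlval⟩ := hivt ⟨hφ1.le, hφM⟩
  exact ⟨l, hl.1, hlval⟩

/-- The water-filling construction: a feasible pair minimizing all hockey-stick
divergences simultaneously (real-valued version), under non-degeneracy. -/
lemma construct {X : Type*} [Fintype X] (b : ℝ) (hb0 : 0 < b) (hb1 : b ≤ 1)
    (p q : X → ℝ) (hp0 : ∀ x, 0 ≤ p x) (hq0 : ∀ x, 0 ≤ q x)
    (hp1 : ∑ x, p x = 1) (hq1 : ∑ x, q x = 1)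
    (hTV : ∑ x, min (p x) (q x) < b)
    (hs : b ≤ ∑ x, (if q x = 0 then 0 else p x)) :
    ∃ p' q' : X → ℝ, (∀ x, 0 ≤ p' x) ∧ (∀ x, 0 ≤ q' x) ∧
      (∑ x, p' x = 1) ∧ (∑ x, q' x = 1) ∧
      (∀ x, b * p' x ≤ p x) ∧ (∀ x, b * q' x ≤ q x) ∧
      (∀ γ : ℝ, 0 ≤ γ → ∀ p'' q'' : X → ℝ,
        (∑ x, p'' x = 1) → (∑ x, q'' x = 1) →
        (∀ x, b * p'' x ≤ p x) → (∀ x, b * q'' x ≤ q x) →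
        ∑ x, max (p' x - γ * q' x) 0 ≤ ∑ x, max (p'' x - γ * q'' x) 0) := by
  classical
  obtain ⟨l, hl1, hlsum⟩ := exists_clip p q hp0 hq0 hq1 b hTV hs
  set p' : X → ℝ := fun x => min (p x) (l * q x) / b with hp'
  have hp't : ∀ x, b * p' x = min (p x) (l * q x) := by
    intro x; rw [hp']; field_simp
  have hp'0 : ∀ x, 0 ≤ p' x := by
    intro x
    exact div_nonneg (le_min (hp0 x) (mul_nonneg (zero_le_one.trans hl1) (hq0 x))) hb0.le
  have hp'sum : ∑ x, p' x = 1 := by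
    rw [hp', ← Finset.sum_div, hlsum, div_self hb0.ne']
  have hp'f : ∀ x, b * p' x ≤ p x := by
    intro x; rw [hp't x]; exact min_le_left _ _
  set t := ∑ x, (if p x = 0 then 0 else q x) with hts
  by_cases ht : b ≤ t
  · -- non-degenerate Q side
    have hTV' : ∑ x, min (q x) (p x) < b := by
      have : ∀ x, min (q x) (p x) = min (p x) (q x) := fun x => min_comm _ _
      rw [Finset.sum_congr rfl (fun x _ => this x)]; exact hTV
    obtain ⟨c, hc1, hcsum⟩ := exists_clip q p hq0 hp0 hp1 b hTV' ht
    have hc0 : 0 < c := lt_of_lt_of_le zero_lt_one hc1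
    set q' : X → ℝ := fun x => min (q x) (c * p x) / b with hq'
    have hq't : ∀ x, b * q' x = min (q x) (c * p x) := by
      intro x; rw [hq']; field_simp
    have hq'0 : ∀ x, 0 ≤ q' x := fun x =>
      div_nonneg (le_min (hq0 x) (mul_nonneg hc0.le (hp0 x))) hb0.le
    have hq'sum : ∑ x, q' x = 1 := by
      rw [hq', ← Finset.sum_div, hcsum, div_self hb0.ne']
    have hq'f : ∀ x, b * q' x ≤ q x := by
      intro x; rw [hq't x]; exact min_le_left _ _
    refine ⟨p', q', hp'0, hq'0, hp'sum, hq'sum, hp'f, hq'f, ?_⟩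
    intro γ hγ p'' q'' hp''sum hq''sum hp''f hq''f
    refine compare b l c⁻¹ p q p' q' p'' q'' hb0 hq0 ?_ hq'0 hq'sum hp't hlsum ?_ ?_
      hp''sum hq''sum hp''f hq''f γ hγ
    · calc c⁻¹ ≤ 1 := inv_le_one_of_one_le₀ hc1
        _ ≤ l := hl1
    · -- hsmall
      intro γ' hγ'0 hγ'c x
      have h1 : γ' * (b * q' x) ≤ b * p' x := by
        rw [hq't x, hp't x]
        have hγ1 : γ' ≤ 1 := hγ'c.trans (inv_le_one_of_one_le₀ hc1)
        refine le_min ?_ ?_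
        · calc γ' * min (q x) (c * p x) ≤ γ' * (c * p x) :=
                mul_le_mul_of_nonneg_left (min_le_right _ _) hγ'0
            _ = (γ' * c) * p x := by ring
            _ ≤ 1 * p x := by
                refine mul_le_mul_of_nonneg_right ?_ (hp0 x)
                calc γ' * c ≤ c⁻¹ * c := mul_le_mul_of_nonneg_right hγ'c hc0.le
                  _ = 1 := inv_mul_cancel₀ hc0.ne'
            _ = p x := one_mul _
        · calc γ' * min (q x) (c * p x) ≤ γ' * q x :=
                mul_le_mul_of_nonneg_left (min_le_left _ _) hγ'0
            _ ≤ 1 * q x := mul_le_mul_of_nonneg_right hγ1 (hq0 x)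
            _ ≤ l * q x := mul_le_mul_of_nonneg_right hl1 (hq0 x)
      have := (mul_le_mul_iff_right₀ hb0).mp (by linarith [h1] : b * (γ' * q' x) ≤ b * p' x)
      exact this
    · -- hmid
      intro γ' hγ'c x
      have hγ'0 : 0 ≤ γ' := le_trans (inv_nonneg.2 hc0.le) hγ'c
      rw [hq't x, mul_min_of_nonneg _ _ hγ'0]
      refine le_min (min_le_right _ _) ?_
      have h1c : 1 ≤ γ' * c := by
        calc 1 = c⁻¹ * c := (inv_mul_cancel₀ hc0.ne').symm
          _ ≤ γ' * c := mul_le_mul_of_nonneg_right hγ'c hc0.le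
      have h2 : p x ≤ γ' * (c * p x) := by
        calc p x = 1 * p x := (one_mul _).symm
          _ ≤ (γ' * c) * p x := mul_le_mul_of_nonneg_right h1c (hp0 x)
          _ = γ' * (c * p x) := by ring
      exact (min_le_left _ _).trans h2
  · -- degenerate Q side
    push_neg at ht
    have hF2 : (Finset.univ.filter (fun x => p x ≠ 0)).Nonempty := by
      rw [Finset.filter_nonempty_iff]
      by_contra h
      push_neg at h
      have : ∑ x, p x = 0 := Finset.sum_eq_zero (fun x hx => h x hx)
      rw [hp1] at this; norm_num at this
    set c := max ((Finset.univ.filter (fun x => p x ≠ 0)).sup' hF2 (fun x => q x / p x)) 1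
      with hc
    have hc1 : (1:ℝ) ≤ c := le_max_right _ _
    have hc0 : (0:ℝ) < c := lt_of_lt_of_le zero_lt_one hc1
    have hcp : ∀ x, p x ≠ 0 → q x ≤ c * p x := by
      intro x hx
      have hpx : 0 < p x := lt_of_le_of_ne (hp0 x) (Ne.symm hx)
      have hmem : x ∈ Finset.univ.filter (fun y => p y ≠ 0) :=
        Finset.mem_filter.2 ⟨Finset.mem_univ x, hx⟩
      have h1 : q x / p x ≤ c := by
        rw [hc]
        exact le_trans (Finset.le_sup' (fun y => q y / p y) hmem) (le_max_left _ _)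
      exact (div_le_iff₀ hpx).mp h1
    have hminq : ∀ x, min (q x) (c * p x) = (if p x = 0 then 0 else q x) := by
      intro x
      by_cases hx : p x = 0
      · rw [if_pos hx, hx, mul_zero, min_eq_right (hq0 x)]
      · rw [if_neg hx, min_eq_left (hcp x hx)]
    have ht0 : 0 ≤ t := Finset.sum_nonneg (fun x _ => by
      by_cases hx : p x = 0 <;> simp [hx, hq0 x])
    have ht1 : t < 1 := lt_of_lt_of_le ht hb1
    have h1t : (0:ℝ) < 1 - t := by linarith
    set κ := (b - t) / (b * (1 - t)) with hκ
    have hκ0 : 0 ≤ κ := div_nonneg (by linarith) (by positivity)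
    set q' : X → ℝ := fun x => min (q x) (c * p x) / b + κ * (if p x = 0 then q x else 0)
      with hq'
    have hq'0 : ∀ x, 0 ≤ q' x := by
      intro x
      apply add_nonneg
      · exact div_nonneg (le_min (hq0 x) (mul_nonneg hc0.le (hp0 x))) hb0.le
      · apply mul_nonneg hκ0
        by_cases hx : p x = 0 <;> simp [hx, hq0 x]
    have hcomp : ∀ x, (if p x = 0 then (q x) else 0) = q x - (if p x = 0 then 0 else q x) := by
      intro x; by_cases hx : p x = 0 <;> simp [hx]
    have hsum2 : ∑ x, (if p x = 0 then (q x) else 0) = 1 - t := by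
      rw [Finset.sum_congr rfl (fun x _ => hcomp x), Finset.sum_sub_distrib, hq1, hts]
    have hminsum : ∑ x, min (q x) (c * p x) = t := by
      rw [Finset.sum_congr rfl (fun x _ => hminq x), hts]
    have hq'sum : ∑ x, q' x = 1 := by
      rw [hq', Finset.sum_add_distrib, ← Finset.sum_div, hminsum, ← Finset.mul_sum, hsum2, hκ]
      field_simp
      ring
    have hq'f : ∀ x, b * q' x ≤ q x := by
      intro x
      simp only [hq']
      by_cases hx : p x = 0
      · rw [hminq x, if_pos hx, if_pos hx]
        have : b * (0 / b + κ * q x) = (b * κ) * q x := by field_simp; ring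
        rw [this]
        have hbκ : b * κ ≤ 1 := by
          rw [hκ]
          rw [mul_div_assoc']
          rw [div_le_one (by positivity)]
          calc b * (b - t) ≤ b * (1 - t) := by nlinarith
            _ = b * (1 - t) := rfl
        nlinarith [hq0 x]
      · rw [if_neg hx, mul_zero, add_zero]
        have : b * (min (q x) (c * p x) / b) = min (q x) (c * p x) := by field_simp
        rw [this]
        exact min_le_left _ _
    refine ⟨p', q', hp'0, hq'0, hp'sum, hq'sum, hp'f, hq'f, ?_⟩
    intro γ hγ p'' q'' hp''sum hq''sum hp''f hq''f
    refine compare b l 0 p q p' q' p'' q'' hb0 hq0 (zero_le_one.trans hl1) hq'0 hq'sum hp't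
      hlsum ?_ ?_ hp''sum hq''sum hp''f hq''f γ hγ
    · -- hsmall : only γ' = 0
      intro γ' hγ'0 hγ'c x
      have : γ' = 0 := le_antisymm hγ'c hγ'0
      rw [this, zero_mul]
      exact hp'0 x
    · -- hmid
      intro γ' hγ'0 x
      by_cases hx : p x = 0
      · have h1 : min (p x) (γ' * q x) = 0 := by
          rw [hx, min_eq_left (mul_nonneg hγ'0 (hq0 x))]
        rw [h1]
        exact mul_nonneg hγ'0 (mul_nonneg hb0.le (hq'0 x))
      · have h1 : b * q' x = q x := by
          simp only [hq', if_neg hx, mul_zero, add_zero, hminq x]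
          field_simp
        rw [h1]
        exact min_le_right _ _





lemma integrand_measurable (α : ℝ) (p q : ℝ≥0∞) :
    Measurable (fun γ : ℝ => ENNReal.ofReal (γ ^ (α - 2)) * (p - ENNReal.ofReal γ * q)) := by
  apply Measurable.mul
  · exact (measurable_id'.pow_const _).ennreal_ofReal
  · exact Measurable.sub measurable_const
      ((ENNReal.measurable_ofReal.comp measurable_id).mul_const q)

lemma lintegral_rpow_Ioi_top {r : ℝ} (hr : -1 ≤ r) :
    ∫⁻ γ in Set.Ioi (0:ℝ), ENNReal.ofReal (γ ^ r) = ⊤ := by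
  by_contra h
  have hlt : ∫⁻ γ in Set.Ioi (1:ℝ), ENNReal.ofReal (γ ^ r) < ⊤ := by
    refine lt_of_le_of_lt ?_ (lt_top_iff_ne_top.2 h)
    exact lintegral_mono_set (Set.Ioi_subset_Ioi zero_le_one)
  have hint : IntegrableOn (fun γ : ℝ => γ ^ r) (Set.Ioi (1:ℝ)) := by
    constructor
    · exact (measurable_id.pow_const _).aestronglyMeasurable
    · rw [hasFiniteIntegral_iff_ofReal]
      · exact hlt
      · filter_upwards [ae_restrict_mem measurableSet_Ioi] with γ hγ
        exact Real.rpow_nonneg (le_of_lt (lt_trans zero_lt_one hγ)) r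
  rw [integrableOn_Ioi_rpow_iff zero_lt_one] at hint
  linarith

lemma rep (α : ℝ) (hα : 1 < α) (p q : ℝ≥0∞) (hp : p ≠ ⊤) (hq : q ≠ ⊤) :
    p ^ α * q ^ (1 - α) =
      ENNReal.ofReal (α * (α - 1)) *
        ∫⁻ γ in Set.Ioi (0:ℝ), ENNReal.ofReal (γ ^ (α - 2)) * (p - ENNReal.ofReal γ * q) := by
  have hα0 : (0:ℝ) < α := lt_trans zero_lt_one hα
  have hα1 : (0:ℝ) < α - 1 := by linarith
  have hα2 : (-1:ℝ) < α - 2 := by linarith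
  rcases eq_or_ne p 0 with hp0 | hp0
  · -- p = 0
    subst hp0
    rw [ENNReal.zero_rpow_of_pos hα0, zero_mul]
    have hz : ∀ γ : ℝ, ENNReal.ofReal (γ ^ (α - 2)) * ((0:ℝ≥0∞) - ENNReal.ofReal γ * q) = 0 := by
      intro γ; rw [zero_tsub, mul_zero]
    simp only [hz, lintegral_zero, mul_zero]
  rcases eq_or_ne q 0 with hq0 | hq0
  · -- q = 0 : both sides ⊤
    subst hq0
    have h1 : p ^ α * (0:ℝ≥0∞) ^ (1 - α) = ⊤ := by
      rw [ENNReal.zero_rpow_of_neg (by linarith), ENNReal.mul_top]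
      simp [ENNReal.rpow_eq_zero_iff, hp0, hp, hα0, not_lt.2 hα0.le]
    rw [h1]
    have h2 : ∀ γ : ℝ, ENNReal.ofReal (γ ^ (α - 2)) * (p - ENNReal.ofReal γ * 0)
        = ENNReal.ofReal (γ ^ (α - 2)) * p := by intro γ; simp
    simp only [h2]
    rw [lintegral_mul_const _ ((measurable_id'.pow_const _).ennreal_ofReal),
      lintegral_rpow_Ioi_top hα2.le, ENNReal.top_mul hp0, ENNReal.mul_top]
    · simp only [ne_eq, ENNReal.ofReal_eq_zero, not_le]
      positivity
  · -- main case : 0 < p,q < ⊤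
    set a := p.toReal with ha
    set c := q.toReal with hc
    have ha0 : 0 < a := ENNReal.toReal_pos hp0 hp
    have hc0 : 0 < c := ENNReal.toReal_pos hq0 hq
    set m := a / c with hm
    have hm0 : 0 < m := div_pos ha0 hc0
    have hpa : p = ENNReal.ofReal a := (ENNReal.ofReal_toReal hp).symm
    have hqc : q = ENNReal.ofReal c := (ENNReal.ofReal_toReal hq).symm
    -- split the integral
    have hsplit : Set.Ioi (0:ℝ) = Set.Ioo 0 m ∪ Set.Ici m := by
      ext γ
      simp only [Set.mem_Ioi, Set.mem_union, Set.mem_Ioo, Set.mem_Ici]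
      constructor
      · intro h; rcases lt_or_ge γ m with h2 | h2
        · exact Or.inl ⟨h, h2⟩
        · exact Or.inr h2
      · rintro (⟨h, _⟩ | h); exacts [h, lt_of_lt_of_le hm0 h]
    have hdisj : Disjoint (Set.Ioo (0:ℝ) m) (Set.Ici m) := by
      rw [Set.disjoint_left]
      rintro γ ⟨_, h2⟩ h3
      exact absurd h3 (not_le.2 h2)
    rw [hsplit, lintegral_union measurableSet_Ici hdisj]
    have hIci : ∫⁻ γ in Set.Ici m, ENNReal.ofReal (γ ^ (α - 2)) * (p - ENNReal.ofReal γ * q)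
        = 0 := by
      rw [setLIntegral_congr_fun measurableSet_Ici
        (fun γ (hγ : γ ∈ Set.Ici m) => ?_), lintegral_zero]
      have : p ≤ ENNReal.ofReal γ * q := by
        rw [hpa, hqc, ← ENNReal.ofReal_mul (le_trans hm0.le hγ)]
        apply ENNReal.ofReal_le_ofReal
        rw [hm] at hγ
        calc a = a / c * c := by field_simp
          _ ≤ γ * c := mul_le_mul_of_nonneg_right hγ hc0.le
      rw [tsub_eq_zero_of_le this, mul_zero]
    rw [hIci, add_zero]
    -- on Ioo 0 m the integrand is ofReal of a real function
    have hIoo : ∫⁻ γ in Set.Ioo 0 m, ENNReal.ofReal (γ ^ (α - 2)) * (p - ENNReal.ofReal γ * q)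
        = ∫⁻ γ in Set.Ioo 0 m, ENNReal.ofReal (γ ^ (α - 2) * (a - γ * c)) := by
      refine setLIntegral_congr_fun measurableSet_Ioo ?_
      rintro γ ⟨hγ0, hγm⟩
      dsimp only
      rw [hpa, hqc, ← ENNReal.ofReal_mul hγ0.le, ← ENNReal.ofReal_sub _ (by positivity),
        ← ENNReal.ofReal_mul (by positivity)]
    rw [hIoo]
    -- convert to a Bochner integral
    have hint : IntegrableOn (fun γ : ℝ => γ ^ (α - 2) * (a - γ * c)) (Set.Ioo 0 m) := by
      have h1 : IntegrableOn (fun γ : ℝ => γ ^ (α - 2)) (Set.Ioo 0 m) := by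
        have := intervalIntegral.intervalIntegrable_rpow' (a := 0) (b := m) hα2
        rw [intervalIntegrable_iff_integrableOn_Ioo_of_le hm0.le] at this
        exact this
      have h2 : IntegrableOn (fun γ : ℝ => γ ^ (α - 1)) (Set.Ioo 0 m) := by
        have := intervalIntegral.intervalIntegrable_rpow' (a := 0) (b := m) (by linarith : (-1:ℝ) < α - 1)
        rw [intervalIntegrable_iff_integrableOn_Ioo_of_le hm0.le] at this
        exact this
      have heq : ∀ γ ∈ Set.Ioo (0:ℝ) m, γ ^ (α - 2) * (a - γ * c)
          = a * γ ^ (α - 2) - c * γ ^ (α - 1) := by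
        rintro γ ⟨hγ0, _⟩
        have hstep : γ ^ (α - 1) = γ ^ (α - 2) * γ := by
          rw [show α - 1 = α - 2 + 1 by ring, Real.rpow_add_one hγ0.ne']
        rw [hstep]; ring
      exact IntegrableOn.congr_fun ((h1.const_mul a).sub (h2.const_mul c))
        (fun γ hγ => (heq γ hγ).symm) measurableSet_Ioo
    have hnn : 0 ≤ᵐ[volume.restrict (Set.Ioo 0 m)] fun γ : ℝ => γ ^ (α - 2) * (a - γ * c) := by
      filter_upwards [ae_restrict_mem measurableSet_Ioo] with γ hγ
      obtain ⟨hγ0, hγm⟩ := hγ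
      have : γ * c ≤ a := by
        rw [hm] at hγm
        calc γ * c ≤ a / c * c := mul_le_mul_of_nonneg_right hγm.le hc0.le
          _ = a := by field_simp
      have h2 : (0:ℝ) ≤ γ ^ (α - 2) := Real.rpow_nonneg hγ0.le _
      exact mul_nonneg h2 (by linarith)
    rw [← ofReal_integral_eq_lintegral_ofReal hint hnn]
    -- compute the real integral
    have hval : ∫ γ in Set.Ioo (0:ℝ) m, γ ^ (α - 2) * (a - γ * c)
        = a * (m ^ (α - 1) / (α - 1)) - c * (m ^ α / α) := by
      have hcong : ∫ γ in Set.Ioo (0:ℝ) m, γ ^ (α - 2) * (a - γ * c)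
          = ∫ γ in Set.Ioo (0:ℝ) m, (a * γ ^ (α - 2) - c * γ ^ (α - 1)) := by
        refine setIntegral_congr_fun measurableSet_Ioo ?_
        rintro γ ⟨hγ0, _⟩
        show γ ^ (α - 2) * (a - γ * c) = a * γ ^ (α - 2) - c * γ ^ (α - 1)
        have hstep : γ ^ (α - 1) = γ ^ (α - 2) * γ := by
          rw [show α - 1 = α - 2 + 1 by ring, Real.rpow_add_one hγ0.ne']
        rw [hstep]; ring
      rw [hcong, ← integral_Ioc_eq_integral_Ioo,
        ← intervalIntegral.integral_of_le hm0.le]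
      have hi1 : IntervalIntegrable (fun γ : ℝ => γ ^ (α - 2)) volume 0 m :=
        intervalIntegral.intervalIntegrable_rpow' hα2
      have hi2 : IntervalIntegrable (fun γ : ℝ => γ ^ (α - 1)) volume 0 m :=
        intervalIntegral.intervalIntegrable_rpow' (by linarith)
      rw [intervalIntegral.integral_sub (hi1.const_mul a) (hi2.const_mul c),
        intervalIntegral.integral_const_mul, intervalIntegral.integral_const_mul,
        integral_rpow (Or.inl hα2), integral_rpow (Or.inl (by linarith : (-1:ℝ) < α - 1))]
      have z1 : (0:ℝ) ^ (α - 2 + 1) = 0 := Real.zero_rpow (by linarith)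
      have z2 : (0:ℝ) ^ (α - 1 + 1) = 0 := Real.zero_rpow (by linarith)
      rw [z1, z2]
      have e1 : α - 2 + 1 = α - 1 := by ring
      have e2 : α - 1 + 1 = α := by ring
      rw [e1, e2]
      ring
    rw [hval, ← ENNReal.ofReal_mul (by positivity)]
    rw [hpa, hqc, ENNReal.ofReal_rpow_of_pos ha0, ENNReal.ofReal_rpow_of_pos hc0,
      ← ENNReal.ofReal_mul (by positivity)]
    congr 1
    have hm1 : m ^ (α - 1) = a ^ (α - 1) / c ^ (α - 1) := by
      rw [hm, Real.div_rpow ha0.le hc0.le]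
    have hm2 : m ^ α = a ^ α / c ^ α := by rw [hm, Real.div_rpow ha0.le hc0.le]
    have e1 : a ^ (α - 1) = a ^ α / a := by rw [Real.rpow_sub ha0, Real.rpow_one]
    have e2 : c ^ ((1:ℝ) - α) = c / c ^ α := by rw [Real.rpow_sub hc0, Real.rpow_one]
    have e3 : c ^ (α - 1) = c ^ α / c := by rw [Real.rpow_sub hc0, Real.rpow_one]
    have hca : (0:ℝ) < c ^ α := Real.rpow_pos_of_pos hc0 α
    have haa : (0:ℝ) < a ^ α := Real.rpow_pos_of_pos ha0 α
    rw [hm1, hm2, e1, e2, e3]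
    field_simp
    ring
lemma sum_rep {X : Type*} [Fintype X] (α : ℝ) (hα : 1 < α) (A B : X → ℝ≥0∞)
    (hA : ∀ x, A x ≠ ⊤) (hB : ∀ x, B x ≠ ⊤) :
    ∑ x, A x ^ α * B x ^ (1 - α) = ENNReal.ofReal (α * (α - 1)) *
      ∫⁻ γ in Set.Ioi (0:ℝ), ENNReal.ofReal (γ ^ (α - 2)) *
        ∑ x, (A x - ENNReal.ofReal γ * B x) := by
  rw [Finset.sum_congr rfl (fun x _ => rep α hα (A x) (B x) (hA x) (hB x)),
    ← Finset.mul_sum]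
  congr 1
  rw [← lintegral_finset_sum _ (fun x _ => integrand_measurable α (A x) (B x))]
  congr 1
  ext γ
  rw [Finset.mul_sum]

lemma ofReal_eq_ofReal_max (r : ℝ) : ENNReal.ofReal r = ENNReal.ofReal (max r 0) := by
  rcases le_total r 0 with h | h
  · rw [max_eq_right h, ENNReal.ofReal_eq_zero.2 h, ENNReal.ofReal_zero]
  · rw [max_eq_left h]

/-- simple clipping construction: a feasible PMF always exists. -/
lemma exists_cclip {X : Type*} [Fintype X] (p : X → ℝ) (hp0 : ∀ x, 0 ≤ p x)
    (hp1 : ∑ x, p x = 1) (b : ℝ) (hb0 : 0 < b) (hb1 : b ≤ 1) :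
    ∃ p' : X → ℝ, (∀ x, 0 ≤ p' x) ∧ (∑ x, p' x = 1) ∧ (∀ x, b * p' x ≤ p x) := by
  classical
  set χ : ℝ → ℝ := fun c => ∑ x, min (p x) c with hχ
  have hcont : Continuous χ := by
    apply continuous_finset_sum
    intro x _
    exact continuous_const.min continuous_id
  have hχ0 : χ 0 = 0 := by
    apply Finset.sum_eq_zero
    intro x _
    exact min_eq_right (hp0 x)
  have hχ1 : χ 1 = 1 := by
    rw [hχ]
    have : ∀ x, min (p x) 1 = p x := by
      intro x
      refine min_eq_left ?_
      calc p x ≤ ∑ y, p y := Finset.single_le_sum (fun y _ => hp0 y) (Finset.mem_univ x)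
        _ = 1 := hp1
    simp only []
    rw [Finset.sum_congr rfl (fun x _ => this x), hp1]
  have hivt := intermediate_value_Icc (zero_le_one) hcont.continuousOn
  obtain ⟨c, hc, hcval⟩ := hivt (by rw [hχ0, hχ1]; exact ⟨hb0.le, hb1⟩)
  refine ⟨fun x => min (p x) c / b, ?_, ?_, ?_⟩
  · intro x
    exact div_nonneg (le_min (hp0 x) hc.1) hb0.le
  · rw [← Finset.sum_div]
    rw [show (∑ i : X, min (p i) c) = χ c from rfl, hcval, div_self hb0.ne']
  · intro x
    rw [mul_div_cancel₀ _ hb0.ne']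
    exact min_le_left _ _

end WaterFillAux

/-- The optimal pair (P', Q') in the water-filling characterization of D_α^δ(P‖Q)
does not depend on α: a single feasible pair simultaneously minimizes
Σ_x P'(x)^α Q'(x)^{1−α} for every α > 1. -/

theorem stmt14 {X : Type*} [Fintype X] (δ : ℝ) (hδ : δ ∈ Set.Ioo (0:ℝ) 1)
    (P Q : X → ℝ≥0∞) (hP : IsPMF P) (hQ : IsPMF Q)
    (hTV : ∑ x, min (P x) (Q x) < ENNReal.ofReal (1 - δ)) :
    ∃ P' Q' : X → ℝ≥0∞, IsPMF P' ∧ IsPMF Q' ∧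
      (∀ x, ENNReal.ofReal (1 - δ) * P' x ≤ P x) ∧
      (∀ x, ENNReal.ofReal (1 - δ) * Q' x ≤ Q x) ∧
      ∀ α : ℝ, 1 < α → ∀ P'' Q'' : X → ℝ≥0∞, IsPMF P'' → IsPMF Q'' →
        (∀ x, ENNReal.ofReal (1 - δ) * P'' x ≤ P x) →
        (∀ x, ENNReal.ofReal (1 - δ) * Q'' x ≤ Q x) →
        ∑ x, P' x ^ α * Q' x ^ (1 - α) ≤ ∑ x, P'' x ^ α * Q'' x ^ (1 - α) := by
  classical
  obtain ⟨hδ0, hδ1⟩ := hδ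
  set b : ℝ := 1 - δ with hbdef
  have hb0 : 0 < b := by simp only [hbdef]; linarith
  have hb1 : b ≤ 1 := by simp only [hbdef]; linarith
  -- finiteness helpers
  have hfin : ∀ (R : X → ℝ≥0∞), IsPMF R → ∀ x, R x ≠ ⊤ := by
    intro R hR x h
    have hle : R x ≤ ∑ y, R y :=
      Finset.single_le_sum (f := R) (fun y _ => zero_le) (Finset.mem_univ x)
    rw [hR, h] at hle
    exact (by simpa using hle : (⊤:ℝ≥0∞) ≤ 1).not_gt (by norm_num)
  have hPfin := hfin P hP
  have hQfin := hfin Q hQ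
  set p : X → ℝ := fun x => (P x).toReal with hpdef
  set q : X → ℝ := fun x => (Q x).toReal with hqdef
  have hPp : ∀ x, P x = ENNReal.ofReal (p x) := fun x => (ENNReal.ofReal_toReal (hPfin x)).symm
  have hQq : ∀ x, Q x = ENNReal.ofReal (q x) := fun x => (ENNReal.ofReal_toReal (hQfin x)).symm
  have hp0 : ∀ x, 0 ≤ p x := fun x => ENNReal.toReal_nonneg
  have hq0 : ∀ x, 0 ≤ q x := fun x => ENNReal.toReal_nonneg
  have hsum_toReal : ∀ (R : X → ℝ≥0∞), IsPMF R → ∑ x, (R x).toReal = 1 := by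
    intro R hR
    rw [← ENNReal.toReal_sum (fun x _ => hfin R hR x), hR, ENNReal.toReal_one]
  have hp1 : ∑ x, p x = 1 := hsum_toReal P hP
  have hq1 : ∑ x, q x = 1 := hsum_toReal Q hQ
  have hminfin : ∀ x ∈ Finset.univ, min (P x) (Q x) ≠ ⊤ := by
    intro x _
    exact fun h => hPfin x (eq_top_mono (min_le_left _ _) h)
  have hTVr : ∑ x, min (p x) (q x) < b := by
    have hne : ∑ x, min (P x) (Q x) ≠ ⊤ := by
      rw [ne_eq, ENNReal.sum_eq_top]
      push_neg
      intro x hx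
      exact hminfin x hx
    have h2 := (ENNReal.toReal_lt_toReal hne ENNReal.ofReal_ne_top).2 hTV
    rw [ENNReal.toReal_ofReal hb0.le, ENNReal.toReal_sum hminfin] at h2
    calc ∑ x, min (p x) (q x) = ∑ x, (min (P x) (Q x)).toReal :=
        Finset.sum_congr rfl (fun x _ => (ENNReal.toReal_min (hPfin x) (hQfin x)).symm)
      _ < b := h2
  -- PMF/feasibility lifting helper
  have hlift : ∀ (r : X → ℝ), (∀ x, 0 ≤ r x) → (∑ x, r x = 1) →
      IsPMF (fun x => ENNReal.ofReal (r x)) := by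
    intro r hr0 hr1
    show ∑ x, ENNReal.ofReal (r x) = 1
    rw [← ENNReal.ofReal_sum_of_nonneg (fun x _ => hr0 x), hr1, ENNReal.ofReal_one]
  have hfeas : ∀ (r : X → ℝ) (R : X → ℝ≥0∞), (∀ x, R x ≠ ⊤) → (∀ x, b * r x ≤ (R x).toReal) →
      ∀ x, ENNReal.ofReal b * ENNReal.ofReal (r x) ≤ R x := by
    intro r R hRfin hr x
    rw [← ENNReal.ofReal_mul hb0.le, ← ENNReal.ofReal_toReal (hRfin x)]
    exact ENNReal.ofReal_le_ofReal (hr x)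
  -- degenerate / non-degenerate split
  by_cases hd : b ≤ ∑ x, (if q x = 0 then 0 else p x)
  · -- non-degenerate case : water-filling pair
    obtain ⟨p', q', hp'0, hq'0, hp'1, hq'1, hp'f, hq'f, hopt⟩ :=
      construct b hb0 hb1 p q hp0 hq0 hp1 hq1 hTVr hd
    refine ⟨fun x => ENNReal.ofReal (p' x), fun x => ENNReal.ofReal (q' x),
      hlift p' hp'0 hp'1, hlift q' hq'0 hq'1,
      fun x => hfeas p' P hPfin hp'f x, fun x => hfeas q' Q hQfin hq'f x, ?_⟩
    intro α hα P'' Q'' hP'' hQ'' hP''f hQ''f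
    have hP''fin := hfin P'' hP''
    have hQ''fin := hfin Q'' hQ''
    set p'' : X → ℝ := fun x => (P'' x).toReal with hp''def
    set q'' : X → ℝ := fun x => (Q'' x).toReal with hq''def
    have hP''p : ∀ x, P'' x = ENNReal.ofReal (p'' x) :=
      fun x => (ENNReal.ofReal_toReal (hP''fin x)).symm
    have hQ''q : ∀ x, Q'' x = ENNReal.ofReal (q'' x) :=
      fun x => (ENNReal.ofReal_toReal (hQ''fin x)).symm
    have hp''1 : ∑ x, p'' x = 1 := hsum_toReal P'' hP''
    have hq''1 : ∑ x, q'' x = 1 := hsum_toReal Q'' hQ''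
    have hfeas'' : ∀ (R'' R : X → ℝ≥0∞), (∀ x, R x ≠ ⊤) →
        (∀ x, ENNReal.ofReal b * R'' x ≤ R x) →
        ∀ x, b * (R'' x).toReal ≤ (R x).toReal := by
      intro R'' R hRfin hf x
      have h1 := ENNReal.toReal_mono (hRfin x) (hf x)
      rwa [ENNReal.toReal_mul, ENNReal.toReal_ofReal hb0.le] at h1
    have hp''f : ∀ x, b * p'' x ≤ p x := hfeas'' P'' P hPfin hP''f
    have hq''f : ∀ x, b * q'' x ≤ q x := hfeas'' Q'' Q hQfin hQ''f
    -- ENNReal hockey-stick comparison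
    have hcompE : ∀ γ : ℝ,
        ∑ x, (ENNReal.ofReal (p' x) - ENNReal.ofReal γ * ENNReal.ofReal (q' x)) ≤
        ∑ x, (P'' x - ENNReal.ofReal γ * Q'' x) := by
      intro γ
      rcases lt_or_ge γ 0 with hγ | hγ
      · have hz : ENNReal.ofReal γ = 0 := ENNReal.ofReal_eq_zero.2 hγ.le
        simp only [hz, zero_mul, tsub_zero]
        rw [hlift p' hp'0 hp'1, hP'']
      · have hptw : ∀ (r s : X → ℝ) (x : X), 0 ≤ s x →
            ENNReal.ofReal (r x) - ENNReal.ofReal γ * ENNReal.ofReal (s x)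
              = ENNReal.ofReal (max (r x - γ * s x) 0) := by
          intro r s x hs
          rw [← ENNReal.ofReal_mul hγ, ← ENNReal.ofReal_sub _ (mul_nonneg hγ hs)]
          exact ofReal_eq_ofReal_max _
        have hL : ∑ x, (ENNReal.ofReal (p' x) - ENNReal.ofReal γ * ENNReal.ofReal (q' x))
            = ENNReal.ofReal (∑ x, max (p' x - γ * q' x) 0) := by
          rw [ENNReal.ofReal_sum_of_nonneg (fun x _ => le_max_right _ _)]
          exact Finset.sum_congr rfl (fun x _ => hptw p' q' x (hq'0 x))
        have hR : ∑ x, (P'' x - ENNReal.ofReal γ * Q'' x)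
            = ENNReal.ofReal (∑ x, max (p'' x - γ * q'' x) 0) := by
          rw [ENNReal.ofReal_sum_of_nonneg (fun x _ => le_max_right _ _)]
          refine Finset.sum_congr rfl (fun x _ => ?_)
          rw [hP''p x, hQ''q x]
          exact hptw p'' q'' x ENNReal.toReal_nonneg
        rw [hL, hR]
        exact ENNReal.ofReal_le_ofReal (hopt γ hγ p'' q'' hp''1 hq''1 hp''f hq''f)
    rw [sum_rep α hα _ _ (fun x => ENNReal.ofReal_ne_top) (fun x => ENNReal.ofReal_ne_top),
      sum_rep α hα P'' Q'' hP''fin hQ''fin]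
    exact mul_le_mul_right (lintegral_mono (fun γ => mul_le_mul_right (hcompE γ) _)) _
  · -- degenerate case : every feasible pair has infinite divergence
    push_neg at hd
    obtain ⟨p', hp'0, hp'1, hp'f⟩ := exists_cclip p hp0 hp1 b hb0 hb1
    obtain ⟨q', hq'0, hq'1, hq'f⟩ := exists_cclip q hq0 hq1 b hb0 hb1
    refine ⟨fun x => ENNReal.ofReal (p' x), fun x => ENNReal.ofReal (q' x),
      hlift p' hp'0 hp'1, hlift q' hq'0 hq'1,
      fun x => hfeas p' P hPfin hp'f x, fun x => hfeas q' Q hQfin hq'f x, ?_⟩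
    intro α hα P'' Q'' hP'' hQ'' hP''f hQ''f
    have hP''fin := hfin P'' hP''
    have hQ''fin := hfin Q'' hQ''
    -- find a point where P'' > 0 but Q = 0
    have hex : ∃ x, P'' x ≠ 0 ∧ Q x = 0 := by
      by_contra hc
      push_neg at hc
      have hzero : ∀ x, q x = 0 → P'' x = 0 := by
        intro x hx
        by_contra h2
        have hQx := hc x h2
        exact hQx (by rw [hQq x, hx, ENNReal.ofReal_zero])
      have h1 : (1:ℝ≥0∞) = ∑ x, P'' x := hP''.symm
      have h2 : ENNReal.ofReal b * ∑ x, P'' x ≤ ∑ x, (if q x = 0 then 0 else P x) := by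
        rw [Finset.mul_sum]
        refine Finset.sum_le_sum (fun x _ => ?_)
        by_cases hx : q x = 0
        · rw [if_pos hx, hzero x hx, mul_zero]
        · rw [if_neg hx]
          exact hP''f x
      rw [← h1, mul_one] at h2
      have h3 : ∑ x, (if q x = 0 then 0 else P x) = ENNReal.ofReal (∑ x, if q x = 0 then 0 else p x) := by
        rw [ENNReal.ofReal_sum_of_nonneg (fun x _ => by positivity)]
        refine Finset.sum_congr rfl (fun x _ => ?_)
        by_cases hx : q x = 0 <;> simp [hx, hPp x]
      rw [h3] at h2
      have h4 : b ≤ ∑ x, (if q x = 0 then 0 else p x) := by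
        have := (ENNReal.ofReal_le_ofReal_iff (by
          refine Finset.sum_nonneg (fun x _ => ?_)
          by_cases hx : q x = 0 <;> simp [hx, hp0 x])).1 h2
        exact this
      linarith
    obtain ⟨x₀, hx₀1, hx₀2⟩ := hex
    have hQ''0 : Q'' x₀ = 0 := by
      have h1 := hQ''f x₀
      rw [hx₀2, le_zero_iff, mul_eq_zero] at h1
      rcases h1 with h1 | h1
      · exact absurd h1 (by simp [ENNReal.ofReal_eq_zero]; linarith)
      · exact h1
    have hterm : P'' x₀ ^ α * Q'' x₀ ^ (1 - α) = ⊤ := by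
      rw [hQ''0, ENNReal.zero_rpow_of_neg (by linarith), ENNReal.mul_top]
      simp only [ne_eq, ENNReal.rpow_eq_zero_iff, not_or, not_and]
      constructor
      · intro h; exact absurd h hx₀1
      · intro h; exact absurd h (hP''fin x₀)
    have htop : ∑ x, P'' x ^ α * Q'' x ^ (1 - α) = ⊤ :=
      ENNReal.sum_eq_top.2 ⟨x₀, Finset.mem_univ x₀, hterm⟩
    rw [htop]
    exact le_top
end

section
/- Let n_d > 2 be odd, δ ∈ (0, 1/n_d], μ = (n_d−1)/2, and let ε* ≥ 0 be the unique solution of δ · Σ_{x=0}^{n_d−1} e^{ε(μ − |x−μ|)} = 1. Then the truncated discrete Laplace distribution P*(x) = δ · e^{ε*(μ − |x−μ|)} on {0,…,n_d−1} satisfies H_{e^{ε*}}(P*‖P*₊) ≤ δ and H_{e^{ε*}}(P*₊‖P*) ≤ δ (where P*₊ is P* shifted by one), and it is the unique distribution supported on {0,…,n_d−1} minimizing ε among all distributions X on {0,…,n_d−1} whose shift-by-one pair satisfies the (ε, δ)-DP hockey-stick condition in both directions. -/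
/-- Hockey-stick divergence H_{e^ε}(A‖B) = Σ_x max{A(x) − e^ε B(x), 0} for
(finitely supported) distributions on ℤ. -/
noncomputable def hockey (ε : ℝ) (A B : ℤ → ℝ) : ℝ :=
  ∑' x : ℤ, max (A x - Real.exp ε * B x) 0

/-- Shift of a distribution on ℤ by one. -/
def shift (A : ℤ → ℝ) : ℤ → ℝ := fun x => A (x - 1)

/-- The truncated discrete Laplace distribution on {0,…,n_d−1}. -/
noncomputable def truncDLap (nd : ℕ) (δ ε : ℝ) : ℤ → ℝ := fun x =>
  if 0 ≤ x ∧ x ≤ (nd : ℤ) - 1 then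
    δ * Real.exp (ε * (((nd : ℝ) - 1) / 2 - |(x : ℝ) - ((nd : ℝ) - 1) / 2|))
  else 0

namespace Stmt16Aux

def natEmb : ℕ ↪ ℤ :=
  ⟨fun n => (n : ℤ), fun a b h => by
    have h' : (a:ℤ) = (b:ℤ) := h
    omega⟩

def revEmb (m : ℕ) : ℕ ↪ ℤ :=
  ⟨fun j => 2*(m:ℤ) - (j:ℤ), fun a b h => by
    have h' : 2*(m:ℤ) - (a:ℤ) = 2*(m:ℤ) - (b:ℤ) := h
    omega⟩

lemma natEmb_apply (n : ℕ) : natEmb n = (n:ℤ) := rfl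

lemma revEmb_apply (m j : ℕ) : revEmb m j = 2*(m:ℤ) - (j:ℤ) := rfl

lemma sum_range_le_tsum (g : ℤ → ℝ) (hg : ∀ x, 0 ≤ g x) (hs : Summable g) (n : ℕ) :
    ∑ j ∈ Finset.range n, g (j : ℤ) ≤ ∑' x, g x := by
  have h1 : ∑ x ∈ (Finset.range n).map natEmb, g x = ∑ j ∈ Finset.range n, g (j:ℤ) :=
    Finset.sum_map _ _ _
  rw [← h1]
  exact Summable.sum_le_tsum _ (fun x _ => hg x) hs

lemma hockey_eq (ε : ℝ) (A : ℤ → ℝ) :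
    hockey ε A (shift A) = ∑' x : ℤ, max (A x - Real.exp ε * A (x - 1)) 0 := rfl

lemma hockey_eq' (ε : ℝ) (A : ℤ → ℝ) :
    hockey ε (shift A) A = ∑' x : ℤ, max (A (x - 1) - Real.exp ε * A x) 0 := rfl

lemma hockey_rev (ε : ℝ) (A : ℤ → ℝ) (c : ℤ) :
    hockey ε (fun x => A (c - x)) (shift (fun x => A (c - x))) = hockey ε (shift A) A := by
  show (∑' x : ℤ, max (A (c - x) - Real.exp ε * A (c - (x-1))) 0)
      = ∑' x : ℤ, max (A (x - 1) - Real.exp ε * A x) 0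
  rw [← (Equiv.subLeft (c+1)).tsum_eq (fun x => max (A (x - 1) - Real.exp ε * A x) 0)]
  congr 1
  funext x
  simp only [Equiv.subLeft_apply]
  rw [show c + 1 - x - 1 = c - x by ring, show c - (x - 1) = c + 1 - x by ring]

lemma step_bound (X : ℤ → ℝ) (ε δ : ℝ) (c : ℤ)
    (hX0 : ∀ x, 0 ≤ X x) (hsupp : ∀ x, x < 0 ∨ c < x → X x = 0)
    (hH : hockey ε X (shift X) ≤ δ) (n : ℕ) :
    ∑ j ∈ Finset.range (n+1), X (j:ℤ) ≤
      Real.exp ε * ∑ j ∈ Finset.range n, X (j:ℤ) + δ := by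
  have hg0 : ∀ x : ℤ, 0 ≤ max (X x - Real.exp ε * X (x-1)) 0 := fun x => le_max_right _ _
  have hgz : ∀ x ∉ Finset.Icc (0:ℤ) (c+1), max (X x - Real.exp ε * X (x-1)) 0 = 0 := by
    intro x hx
    simp only [Finset.mem_Icc, not_and, not_le] at hx
    by_cases h0 : 0 ≤ x
    · have hc := hx h0
      rw [hsupp x (Or.inr (by omega)), hsupp (x-1) (Or.inr (by omega))]
      simp
    · rw [hsupp x (Or.inl (by omega)), hsupp (x-1) (Or.inl (by omega))]
      simp
  have hs : Summable (fun x : ℤ => max (X x - Real.exp ε * X (x-1)) 0) :=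
    summable_of_ne_finset_zero hgz
  have key : ∑ j ∈ Finset.range (n+1), (X (j:ℤ) - Real.exp ε * X ((j:ℤ)-1)) ≤ δ := by
    have h2 : ∑ j ∈ Finset.range (n+1), (X (j:ℤ) - Real.exp ε * X ((j:ℤ)-1))
        ≤ ∑ j ∈ Finset.range (n+1), max (X (j:ℤ) - Real.exp ε * X ((j:ℤ)-1)) 0 :=
      Finset.sum_le_sum fun j _ => le_max_left _ _
    have h3 := sum_range_le_tsum _ hg0 hs (n+1)
    have h4 : (∑' x : ℤ, max (X x - Real.exp ε * X (x-1)) 0) ≤ δ := hH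
    linarith
  have reindex : ∑ j ∈ Finset.range (n+1), X ((j:ℤ)-1) = ∑ j ∈ Finset.range n, X (j:ℤ) := by
    rw [Finset.sum_range_succ']
    have h0 : X (((0:ℕ):ℤ) - 1) = 0 := hsupp _ (Or.inl (by norm_num))
    have hc : ∀ j ∈ Finset.range n, X ((((j+1):ℕ):ℤ) - 1) = X (j:ℤ) := by
      intro j _; congr 1; push_cast; ring
    rw [Finset.sum_congr rfl hc, h0, add_zero]
  rw [Finset.sum_sub_distrib, ← Finset.mul_sum, reindex] at key
  linarith

lemma geom_succ (ε δ : ℝ) (n : ℕ) :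
    δ * ∑ j ∈ Finset.range (n+1), Real.exp (ε * (j:ℝ))
      = Real.exp ε * (δ * ∑ j ∈ Finset.range n, Real.exp (ε * (j:ℝ))) + δ := by
  rw [Finset.sum_range_succ']
  have hc : ∀ j ∈ Finset.range n,
      Real.exp (ε * (((j+1) : ℕ):ℝ)) = Real.exp ε * Real.exp (ε * (j:ℝ)) := by
    intro j _
    rw [← Real.exp_add]; congr 1; push_cast; ring
  rw [Finset.sum_congr rfl hc, ← Finset.mul_sum]
  have h0 : Real.exp (ε * (((0:ℕ)):ℝ)) = 1 := by norm_num
  rw [h0]; ring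

lemma geom_bound (X : ℤ → ℝ) (ε δ : ℝ) (c : ℤ)
    (hX0 : ∀ x, 0 ≤ X x) (hsupp : ∀ x, x < 0 ∨ c < x → X x = 0)
    (hH : hockey ε X (shift X) ≤ δ) :
    ∀ n : ℕ, ∑ j ∈ Finset.range n, X (j:ℤ) ≤ δ * ∑ j ∈ Finset.range n, Real.exp (ε * (j:ℝ)) := by
  intro n
  induction n with
  | zero => simp
  | succ n ih =>
    have h1 := step_bound X ε δ c hX0 hsupp hH n
    have h2 := geom_succ ε δ n
    have h3 : Real.exp ε * ∑ j ∈ Finset.range n, X (j:ℤ)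
        ≤ Real.exp ε * (δ * ∑ j ∈ Finset.range n, Real.exp (ε * (j:ℝ))) :=
      mul_le_mul_of_nonneg_left ih (Real.exp_pos ε).le
    linarith

lemma eq_all (X : ℤ → ℝ) (ε δ : ℝ) (c : ℤ)
    (hX0 : ∀ x, 0 ≤ X x) (hsupp : ∀ x, x < 0 ∨ c < x → X x = 0)
    (hH : hockey ε X (shift X) ≤ δ) (N : ℕ)
    (hEq : ∑ j ∈ Finset.range N, X (j:ℤ) = δ * ∑ j ∈ Finset.range N, Real.exp (ε * (j:ℝ))) :
    ∀ n, n ≤ N → ∑ j ∈ Finset.range n, X (j:ℤ)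
      = δ * ∑ j ∈ Finset.range n, Real.exp (ε * (j:ℝ)) := by
  have step1 : ∀ n : ℕ,
      ∑ j ∈ Finset.range (n+1), X (j:ℤ) = δ * ∑ j ∈ Finset.range (n+1), Real.exp (ε * (j:ℝ)) →
      ∑ j ∈ Finset.range n, X (j:ℤ) = δ * ∑ j ∈ Finset.range n, Real.exp (ε * (j:ℝ)) := by
    intro n h
    have h1 := step_bound X ε δ c hX0 hsupp hH n
    have h2 := geom_bound X ε δ c hX0 hsupp hH n
    have h3 := geom_succ ε δ n
    have hepos := Real.exp_pos ε
    have h4 : Real.exp ε * (δ * ∑ j ∈ Finset.range n, Real.exp (ε * (j:ℝ)))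
        ≤ Real.exp ε * ∑ j ∈ Finset.range n, X (j:ℤ) := by linarith
    have h5 := le_of_mul_le_mul_left h4 hepos
    linarith
  have hd : ∀ d : ℕ, ∑ j ∈ Finset.range (N - d), X (j:ℤ)
      = δ * ∑ j ∈ Finset.range (N - d), Real.exp (ε * (j:ℝ)) := by
    intro d
    induction d with
    | zero => simpa using hEq
    | succ d ih =>
      rcases Nat.lt_or_ge d N with h | h
      · have he : N - d = (N - (d+1)) + 1 := by omega
        rw [he] at ih
        exact step1 _ ih
      · have h1 : N - d = 0 := by omega
        have h2 : N - (d+1) = 0 := by omega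
        rw [h2, ← h1]; exact ih
  intro n hn
  have := hd (N - n)
  rwa [show N - (N - n) = n by omega] at this

lemma eq_values (X : ℤ → ℝ) (ε δ : ℝ) (c : ℤ)
    (hX0 : ∀ x, 0 ≤ X x) (hsupp : ∀ x, x < 0 ∨ c < x → X x = 0)
    (hH : hockey ε X (shift X) ≤ δ) (N : ℕ)
    (hEq : ∑ j ∈ Finset.range N, X (j:ℤ) = δ * ∑ j ∈ Finset.range N, Real.exp (ε * (j:ℝ))) :
    ∀ j : ℕ, j < N → X (j:ℤ) = δ * Real.exp (ε * (j:ℝ)) := by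
  intro j hj
  have h1 := eq_all X ε δ c hX0 hsupp hH N hEq (j+1) (by omega)
  have h2 := eq_all X ε δ c hX0 hsupp hH N hEq j (by omega)
  rw [Finset.sum_range_succ, Finset.sum_range_succ, mul_add] at h1
  linarith

lemma map_range_Icc (m : ℕ) :
    (Finset.range (m+1)).map natEmb = Finset.Icc (0:ℤ) (m:ℤ) := by
  ext x
  simp only [Finset.mem_map, Finset.mem_range, Finset.mem_Icc, natEmb_apply]
  constructor
  · rintro ⟨j, hj, rfl⟩; omega
  · rintro ⟨h0, h1⟩; exact ⟨x.toNat, by omega, by omega⟩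

lemma map_range_Icc2 (m : ℕ) :
    (Finset.range m).map (revEmb m) = Finset.Icc ((m:ℤ)+1) (2*(m:ℤ)) := by
  ext x
  simp only [Finset.mem_map, Finset.mem_range, Finset.mem_Icc, revEmb_apply]
  constructor
  · rintro ⟨j, hj, rfl⟩; omega
  · rintro ⟨h0, h1⟩; exact ⟨(2*(m:ℤ) - x).toNat, by omega, by omega⟩

lemma truncDLap_nonneg (nd : ℕ) (δ ε : ℝ) (hδ : 0 ≤ δ) (x : ℤ) : 0 ≤ truncDLap nd δ ε x := by
  unfold truncDLap
  split
  · exact mul_nonneg hδ (Real.exp_nonneg _)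
  · exact le_rfl

lemma truncDLap_supp (nd : ℕ) (δ ε : ℝ) (x : ℤ) (h : x < 0 ∨ (nd:ℤ) - 1 < x) :
    truncDLap nd δ ε x = 0 := by
  unfold truncDLap
  rw [if_neg (by omega)]

lemma truncDLap_val (m : ℕ) (δ ε : ℝ) (x : ℤ) (h0 : 0 ≤ x) (h1 : x ≤ 2*(m:ℤ)) :
    truncDLap (2*m+1) δ ε x = δ * Real.exp (ε * ((m:ℝ) - |(x:ℝ) - (m:ℝ)|)) := by
  unfold truncDLap
  rw [if_pos (by omega)]
  have hA : (((2*m+1:ℕ):ℝ) - 1)/2 = (m:ℝ) := by push_cast; ring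
  rw [hA]

lemma ratio_up (m : ℕ) (δ ε : ℝ) (hδ : 0 ≤ δ) (hε : 0 ≤ ε) (x : ℤ) (hx : x ≠ 0) :
    truncDLap (2*m+1) δ ε x ≤ Real.exp ε * truncDLap (2*m+1) δ ε (x-1) := by
  by_cases h1 : 0 ≤ x ∧ x ≤ 2*(m:ℤ)
  · obtain ⟨h0, h2⟩ := h1
    rw [truncDLap_val m δ ε x h0 h2, truncDLap_val m δ ε (x-1) (by omega) (by omega)]
    have hcast : ((x - 1 : ℤ):ℝ) = (x:ℝ) - 1 := by push_cast; ring
    rw [hcast]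
    have tri : |(x:ℝ) - 1 - (m:ℝ)| ≤ |(x:ℝ) - (m:ℝ)| + 1 := by
      calc |(x:ℝ) - 1 - (m:ℝ)| = |((x:ℝ) - (m:ℝ)) + (-1)| := by congr 1; ring
      _ ≤ |(x:ℝ) - (m:ℝ)| + |(-1:ℝ)| := abs_add_le _ _
      _ = |(x:ℝ) - (m:ℝ)| + 1 := by norm_num
    have hexp : ε * ((m:ℝ) - |(x:ℝ) - (m:ℝ)|) ≤ ε + ε * ((m:ℝ) - |(x:ℝ) - 1 - (m:ℝ)|) := by
      nlinarith
    calc δ * Real.exp (ε * ((m:ℝ) - |(x:ℝ) - (m:ℝ)|))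
        ≤ δ * Real.exp (ε + ε * ((m:ℝ) - |(x:ℝ) - 1 - (m:ℝ)|)) :=
          mul_le_mul_of_nonneg_left (Real.exp_le_exp.mpr hexp) hδ
      _ = Real.exp ε * (δ * Real.exp (ε * ((m:ℝ) - |(x:ℝ) - 1 - (m:ℝ)|))) := by
          rw [Real.exp_add]; ring
  · rw [truncDLap_supp _ _ _ x (by omega)]
    exact mul_nonneg (Real.exp_nonneg ε) (truncDLap_nonneg _ _ _ hδ _)

lemma ratio_down (m : ℕ) (δ ε : ℝ) (hδ : 0 ≤ δ) (hε : 0 ≤ ε) (x : ℤ)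
    (hx : x ≠ 2*(m:ℤ)+1) :
    truncDLap (2*m+1) δ ε (x-1) ≤ Real.exp ε * truncDLap (2*m+1) δ ε x := by
  by_cases h1 : 1 ≤ x ∧ x ≤ 2*(m:ℤ)
  · obtain ⟨h0, h2⟩ := h1
    rw [truncDLap_val m δ ε x (by omega) h2, truncDLap_val m δ ε (x-1) (by omega) (by omega)]
    have hcast : ((x - 1 : ℤ):ℝ) = (x:ℝ) - 1 := by push_cast; ring
    rw [hcast]
    have tri : |(x:ℝ) - (m:ℝ)| ≤ |(x:ℝ) - 1 - (m:ℝ)| + 1 := by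
      calc |(x:ℝ) - (m:ℝ)| = |((x:ℝ) - 1 - (m:ℝ)) + 1| := by congr 1; ring
      _ ≤ |(x:ℝ) - 1 - (m:ℝ)| + |(1:ℝ)| := abs_add_le _ _
      _ = |(x:ℝ) - 1 - (m:ℝ)| + 1 := by norm_num
    have hexp : ε * ((m:ℝ) - |(x:ℝ) - 1 - (m:ℝ)|) ≤ ε + ε * ((m:ℝ) - |(x:ℝ) - (m:ℝ)|) := by
      nlinarith
    calc δ * Real.exp (ε * ((m:ℝ) - |(x:ℝ) - 1 - (m:ℝ)|))
        ≤ δ * Real.exp (ε + ε * ((m:ℝ) - |(x:ℝ) - (m:ℝ)|)) :=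
          mul_le_mul_of_nonneg_left (Real.exp_le_exp.mpr hexp) hδ
      _ = Real.exp ε * (δ * Real.exp (ε * ((m:ℝ) - |(x:ℝ) - (m:ℝ)|))) := by
          rw [Real.exp_add]; ring
  · rw [truncDLap_supp _ _ _ (x-1) (by omega)]
    exact mul_nonneg (Real.exp_nonneg ε) (truncDLap_nonneg _ _ _ hδ _)

lemma truncDLap_zero (m : ℕ) (δ ε : ℝ) : truncDLap (2*m+1) δ ε 0 = δ := by
  rw [truncDLap_val m δ ε 0 le_rfl (by omega)]
  have h : |((0:ℤ):ℝ) - (m:ℝ)| = (m:ℝ) := by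
    rw [Int.cast_zero, zero_sub, abs_neg, abs_of_nonneg (by positivity)]
  rw [h]
  simp

lemma truncDLap_top (m : ℕ) (δ ε : ℝ) : truncDLap (2*m+1) δ ε (2*(m:ℤ)) = δ := by
  rw [truncDLap_val m δ ε (2*(m:ℤ)) (by omega) le_rfl]
  push_cast
  rw [show |2*(m:ℝ) - (m:ℝ)| = (m:ℝ) by
    rw [show 2*(m:ℝ) - (m:ℝ) = (m:ℝ) by ring, abs_of_nonneg (by positivity)]]
  simp

lemma hockey_P_le (m : ℕ) (δ ε : ℝ) (hδ : 0 < δ) (hε : 0 ≤ ε) :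
    hockey ε (truncDLap (2*m+1) δ ε) (shift (truncDLap (2*m+1) δ ε)) ≤ δ := by
  rw [hockey_eq]
  have hfun : (fun x : ℤ =>
      max (truncDLap (2*m+1) δ ε x - Real.exp ε * truncDLap (2*m+1) δ ε (x-1)) 0)
      = fun x : ℤ => if x = 0 then δ else 0 := by
    funext x
    by_cases hx : x = 0
    · subst hx
      rw [if_pos rfl]
      rw [show (0:ℤ) - 1 = -1 by ring, truncDLap_supp _ _ _ (-1) (by omega),
        truncDLap_zero m δ ε]
      rw [mul_zero, sub_zero]
      exact max_eq_left hδ.le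
    · rw [if_neg hx]
      have := ratio_up m δ ε hδ.le hε x hx
      exact max_eq_right (by linarith)
  rw [hfun, tsum_ite_eq]

lemma hockey_P_le' (m : ℕ) (δ ε : ℝ) (hδ : 0 < δ) (hε : 0 ≤ ε) :
    hockey ε (shift (truncDLap (2*m+1) δ ε)) (truncDLap (2*m+1) δ ε) ≤ δ := by
  rw [hockey_eq']
  have hfun : (fun x : ℤ =>
      max (truncDLap (2*m+1) δ ε (x-1) - Real.exp ε * truncDLap (2*m+1) δ ε x) 0)
      = fun x : ℤ => if x = 2*(m:ℤ)+1 then δ else 0 := by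
    funext x
    by_cases hx : x = 2*(m:ℤ)+1
    · subst hx
      rw [if_pos rfl]
      rw [show 2*(m:ℤ)+1 - 1 = 2*(m:ℤ) by ring, truncDLap_supp _ _ _ (2*(m:ℤ)+1) (by omega),
        truncDLap_top m δ ε]
      rw [mul_zero, sub_zero]
      exact max_eq_left hδ.le
    · rw [if_neg hx]
      have := ratio_down m δ ε hδ.le hε x hx
      exact max_eq_right (by linarith)
  rw [hfun, tsum_ite_eq]

end Stmt16Aux

open Stmt16Aux

/-- For odd n_d > 2 and δ ∈ (0, 1/n_d], the truncated discrete Laplace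
distribution (with ε* normalizing it to total mass 1) satisfies the (ε*, δ)-DP
hockey-stick condition in both directions, and is the unique minimizer of ε among
distributions supported on {0,…,n_d−1}. -/
theorem stmt16 (nd : ℕ) (hnd : 2 < nd) (hodd : Odd nd)
    (δ : ℝ) (hδ : δ ∈ Set.Ioc (0:ℝ) (1 / (nd : ℝ)))
    (εs : ℝ) (hεs : 0 ≤ εs)
    (hZ : δ * ∑ x ∈ Finset.Icc (0 : ℤ) ((nd : ℤ) - 1),
        Real.exp (εs * (((nd : ℝ) - 1) / 2 - |(x : ℝ) - ((nd : ℝ) - 1) / 2|)) = 1) :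
    hockey εs (truncDLap nd δ εs) (shift (truncDLap nd δ εs)) ≤ δ ∧
    hockey εs (shift (truncDLap nd δ εs)) (truncDLap nd δ εs) ≤ δ ∧
    ∀ (Xd : ℤ → ℝ) (ε : ℝ), (∀ x, 0 ≤ Xd x) →
      (∀ x : ℤ, (x < 0 ∨ (nd : ℤ) - 1 < x) → Xd x = 0) → (∑' x, Xd x) = 1 →
      0 ≤ ε → hockey ε Xd (shift Xd) ≤ δ → hockey ε (shift Xd) Xd ≤ δ →
      εs ≤ ε ∧ (ε = εs → Xd = truncDLap nd δ εs) := by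

  obtain ⟨m, hm⟩ := hodd
  subst hm
  have hm1 : 1 ≤ m := by omega
  have hδ0 : 0 < δ := hδ.1
  have hnd1 : ((2*m+1 : ℕ):ℤ) - 1 = 2*(m:ℤ) := by push_cast; ring
  have hA : (((2*m+1:ℕ):ℝ) - 1)/2 = (m:ℝ) := by push_cast; ring
  refine ⟨hockey_P_le m δ εs hδ0 hεs, hockey_P_le' m δ εs hδ0 hεs, ?_⟩
  intro Xd ε hX0 hXsupp hXsum hε hH1 hH2
  -- normalize hZ
  rw [hnd1] at hZ
  simp only [hA] at hZ
  -- split machinery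
  have hsplit : Finset.Icc (0:ℤ) (2*(m:ℤ))
      = Finset.Icc (0:ℤ) (m:ℤ) ∪ Finset.Icc ((m:ℤ)+1) (2*(m:ℤ)) := by
    ext x
    simp only [Finset.mem_Icc, Finset.mem_union]
    omega
  have hdisj : Disjoint (Finset.Icc (0:ℤ) (m:ℤ)) (Finset.Icc ((m:ℤ)+1) (2*(m:ℤ))) := by
    rw [Finset.disjoint_left]
    intro x hx hx'
    simp only [Finset.mem_Icc] at hx hx'
    omega
  have hsum_split : ∀ f : ℤ → ℝ, ∑ x ∈ Finset.Icc (0:ℤ) (2*(m:ℤ)), f x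
      = ∑ x ∈ Finset.Icc (0:ℤ) (m:ℤ), f x + ∑ x ∈ Finset.Icc ((m:ℤ)+1) (2*(m:ℤ)), f x := by
    intro f
    rw [hsplit, Finset.sum_union hdisj]
  -- rewrite the normalization sum in terms of range sums
  have hlow : ∑ x ∈ Finset.Icc (0:ℤ) (m:ℤ), Real.exp (εs * ((m:ℝ) - |(x:ℝ) - (m:ℝ)|))
      = ∑ j ∈ Finset.range (m+1), Real.exp (εs * (j:ℝ)) := by
    rw [← map_range_Icc m, Finset.sum_map]
    apply Finset.sum_congr rfl
    intro j hj
    simp only [Finset.mem_range] at hj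
    simp only [natEmb_apply]
    have hc : (((j:ℕ):ℤ):ℝ) = (j:ℝ) := by push_cast; ring
    have hj' : (j:ℝ) ≤ (m:ℝ) := by exact_mod_cast Nat.lt_succ_iff.mp hj
    rw [hc, abs_of_nonpos (by linarith : (j:ℝ) - (m:ℝ) ≤ 0)]
    congr 1; ring
  have hhigh : ∑ x ∈ Finset.Icc ((m:ℤ)+1) (2*(m:ℤ)),
        Real.exp (εs * ((m:ℝ) - |(x:ℝ) - (m:ℝ)|))
      = ∑ j ∈ Finset.range m, Real.exp (εs * (j:ℝ)) := by
    rw [← map_range_Icc2 m, Finset.sum_map]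
    apply Finset.sum_congr rfl
    intro j hj
    simp only [Finset.mem_range] at hj
    simp only [revEmb_apply]
    have hc : ((2*(m:ℤ) - (j:ℤ) : ℤ):ℝ) = 2*(m:ℝ) - (j:ℝ) := by push_cast; ring
    have hj' : (j:ℝ) < (m:ℝ) := by exact_mod_cast hj
    rw [hc, abs_of_nonneg (by linarith : (0:ℝ) ≤ 2*(m:ℝ) - (j:ℝ) - (m:ℝ))]
    congr 1; ring
  have ZS : δ * (∑ j ∈ Finset.range (m+1), Real.exp (εs * (j:ℝ))
      + ∑ j ∈ Finset.range m, Real.exp (εs * (j:ℝ))) = 1 := by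
    rw [← hlow, ← hhigh, ← hsum_split]
    exact hZ
  -- Xd facts
  have hXsupp' : ∀ x : ℤ, x < 0 ∨ 2*(m:ℤ) < x → Xd x = 0 := by
    intro x hx
    exact hXsupp x (by omega)
  have hXicc : ∑ x ∈ Finset.Icc (0:ℤ) (2*(m:ℤ)), Xd x = 1 := by
    rw [← hXsum]
    refine (tsum_eq_sum ?_).symm
    intro x hx
    simp only [Finset.mem_Icc, not_and, not_le] at hx
    exact hXsupp' x (by by_cases h : 0 ≤ x <;> [right; left] <;> [exact hx h; omega])
  have hXlow : ∑ x ∈ Finset.Icc (0:ℤ) (m:ℤ), Xd x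
      = ∑ j ∈ Finset.range (m+1), Xd ((j:ℕ):ℤ) := by
    rw [← map_range_Icc m, Finset.sum_map]
    rfl
  have hXhigh : ∑ x ∈ Finset.Icc ((m:ℤ)+1) (2*(m:ℤ)), Xd x
      = ∑ j ∈ Finset.range m, Xd (2*(m:ℤ) - (j:ℤ)) := by
    rw [← map_range_Icc2 m, Finset.sum_map]
    rfl
  have hbX := geom_bound Xd ε δ (2*(m:ℤ)) hX0 hXsupp' hH1
  have hYH : hockey ε (fun x => Xd (2*(m:ℤ) - x)) (shift (fun x => Xd (2*(m:ℤ) - x))) ≤ δ := by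
    rw [hockey_rev]
    exact hH2
  have hYsupp : ∀ x : ℤ, x < 0 ∨ 2*(m:ℤ) < x → Xd (2*(m:ℤ) - x) = 0 := by
    intro x hx
    exact hXsupp' _ (by omega)
  have hbY := geom_bound (fun x => Xd (2*(m:ℤ) - x)) ε δ (2*(m:ℤ))
    (fun x => hX0 _) hYsupp hYH
  have e1 : (1:ℝ) = ∑ j ∈ Finset.range (m+1), Xd ((j:ℕ):ℤ)
      + ∑ j ∈ Finset.range m, Xd (2*(m:ℤ) - (j:ℤ)) := by
    rw [← hXlow, ← hXhigh, ← hsum_split Xd, hXicc]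
  have key1 : (1:ℝ) ≤ δ * (∑ j ∈ Finset.range (m+1), Real.exp (ε * (j:ℝ))
      + ∑ j ∈ Finset.range m, Real.exp (ε * (j:ℝ))) := by
    have h1 := hbX (m+1)
    have h2 := hbY m
    rw [mul_add]
    linarith
  -- εs ≤ ε
  have hεse : εs ≤ ε := by
    by_contra hlt
    push_neg at hlt
    have hmono : δ * (∑ j ∈ Finset.range (m+1), Real.exp (ε * (j:ℝ))
        + ∑ j ∈ Finset.range m, Real.exp (ε * (j:ℝ)))
        < δ * (∑ j ∈ Finset.range (m+1), Real.exp (εs * (j:ℝ))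
        + ∑ j ∈ Finset.range m, Real.exp (εs * (j:ℝ))) := by
      apply mul_lt_mul_of_pos_left ?_ hδ0
      apply add_lt_add_of_lt_of_le
      · apply Finset.sum_lt_sum
        · intro j _
          exact Real.exp_le_exp.mpr (mul_le_mul_of_nonneg_right hlt.le (Nat.cast_nonneg j))
        · refine ⟨1, Finset.mem_range.mpr (by omega), ?_⟩
          apply Real.exp_lt_exp.mpr
          simpa using hlt
      · exact Finset.sum_le_sum fun j _ =>
          Real.exp_le_exp.mpr (mul_le_mul_of_nonneg_right hlt.le (Nat.cast_nonneg j))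
    rw [ZS] at hmono
    linarith
  refine ⟨hεse, ?_⟩
  intro heq
  subst heq
  -- equality case
  have h1 := hbX (m+1)
  have h2 := hbY m
  rw [mul_add] at ZS
  have hb1 : ∑ j ∈ Finset.range (m+1), Xd ((j:ℕ):ℤ)
      = δ * ∑ j ∈ Finset.range (m+1), Real.exp (ε * (j:ℝ)) := by linarith
  have hb2 : ∑ j ∈ Finset.range m, Xd (2*(m:ℤ) - (j:ℤ))
      = δ * ∑ j ∈ Finset.range m, Real.exp (ε * (j:ℝ)) := by linarith
  have hv1 := eq_values Xd ε δ (2*(m:ℤ)) hX0 hXsupp' hH1 (m+1) hb1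
  have hv2 := eq_values (fun x => Xd (2*(m:ℤ) - x)) ε δ (2*(m:ℤ))
    (fun x => hX0 _) hYsupp hYH m hb2
  funext x
  by_cases hx0 : 0 ≤ x ∧ x ≤ 2*(m:ℤ)
  · obtain ⟨ha, hb⟩ := hx0
    rw [truncDLap_val m δ ε x ha hb]
    by_cases hxm : x ≤ (m:ℤ)
    · have hj : ((x.toNat : ℕ):ℤ) = x := Int.toNat_of_nonneg ha
      have hval := hv1 x.toNat (by omega)
      rw [hj] at hval
      have hc : ((x.toNat:ℕ):ℝ) = (x:ℝ) := by
        have := congrArg (fun z : ℤ => (z:ℝ)) hj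
        push_cast at this
        exact this
      rw [hc] at hval
      rw [hval]
      have hxm' : (x:ℝ) ≤ (m:ℝ) := by exact_mod_cast hxm
      rw [abs_of_nonpos (by linarith : (x:ℝ) - (m:ℝ) ≤ 0),
        show (m:ℝ) - -((x:ℝ) - (m:ℝ)) = (x:ℝ) by ring]
    · have hj : (((2*(m:ℤ) - x).toNat : ℕ):ℤ) = 2*(m:ℤ) - x := Int.toNat_of_nonneg (by omega)
      have hval := hv2 (2*(m:ℤ) - x).toNat (by omega)
      rw [hj, show 2*(m:ℤ) - (2*(m:ℤ) - x) = x by ring] at hval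
      have hc : (((2*(m:ℤ) - x).toNat:ℕ):ℝ) = 2*(m:ℝ) - (x:ℝ) := by
        have := congrArg (fun z : ℤ => (z:ℝ)) hj
        push_cast at this
        exact this
      rw [hc] at hval
      rw [hval]
      have hxm' : (m:ℝ) ≤ (x:ℝ) := by
        have : (m:ℤ) ≤ x := by omega
        exact_mod_cast this
      rw [abs_of_nonneg (by linarith : (0:ℝ) ≤ (x:ℝ) - (m:ℝ)),
        show (m:ℝ) - ((x:ℝ) - (m:ℝ)) = 2*(m:ℝ) - (x:ℝ) by ring]
  · rw [truncDLap_supp _ _ _ x (by omega), hXsupp' x (by omega)]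
end
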